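/- (Element bubble inverse estimate.) Let d ≥ 1 and k ≥ 0 be integers. There exists a constant γ₂ > 0, depending only on d and k, such that for every h > 0 and every polynomial function q : ℝ^d → ℝ of total degree at most k, ‖∇(ψ_h q)‖_{L²((0,h)^d)} ≤ γ₂ h^{−1} ‖q‖_{L²((0,h)^d)}, where ψ_h is the element bubble function of the cube (0,h)^d, defined by ψ_h(x) := ∏_{i=1}^d 4 (x_i/h)(1 − x_i/h), and ∇ denotes the gradient. -/

import Mathlib

/-!
Substituting `x = h z` turns `ψ_h q` into `ψ_1 r` with `r(z) = q(h z)`, again of degree at most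
`k`; the volume factors `h^d` cancel and each partial derivative contributes `h⁻¹`. This reduces
the estimate to the unit cube with `h = 1`. There, both `∫ |∇(ψ_1 r)|²` and `∫ r²` are continuous
quadratic functions of the coordinates of `r` in a basis of the finite-dimensional space of
polynomials of degree at most `k`, and `∫ r²` is positive definite because a polynomial vanishing
on an open set is zero. Comparing their extrema on the unit sphere of coordinates gives the
constant.
-/

open MeasureTheory Pointwise

namespace MvPolynomial

variable {σ : Type*}

theorem hasFDerivAt_eval [Fintype σ] (p : MvPolynomial σ ℝ) (x : σ → ℝ) :
    HasFDerivAt (fun y => eval y p)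
      (∑ i, eval x (pderiv i p) • ContinuousLinearMap.proj (R := ℝ) (φ := fun _ : σ => ℝ) i) x := by
  classical
  induction p using MvPolynomial.induction_on with
  | C a => simpa using hasFDerivAt_const a x
  | add p q hp hq =>
    simp only [map_add, add_smul, Finset.sum_add_distrib]
    exact hp.add hq
  | mul_X p j hp =>
    simp only [map_mul, eval_X]
    refine (hp.mul (ContinuousLinearMap.proj j).hasFDerivAt).congr_fderiv ?_
    ext v
    simp [pderiv_X, Pi.single_apply, add_mul, Finset.sum_add_distrib, Finset.mul_sum, apply_ite,
      mul_assoc]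

theorem fderiv_eval_smul_single [Fintype σ] [DecidableEq σ] (p : MvPolynomial σ ℝ) (c : ℝ)
    (x : σ → ℝ) (i : σ) :
    fderiv ℝ (fun y => eval (c • y) p) x (Pi.single i 1) = c * eval (c • x) (pderiv i p) := by
  have hchain := (hasFDerivAt_eval p (c • x)).comp x ((hasFDerivAt_id x).const_smul c)
  rw [Function.comp_def] at hchain
  rw [hchain.fderiv]
  simp [Pi.single_apply]

theorem eval_bind₁_C_mul_X (h : ℝ) (p : MvPolynomial σ ℝ) (y : σ → ℝ) :
    eval y (bind₁ (fun j => C h * X j) p) = eval (h • y) p := by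
  show eval₂Hom (RingHom.id ℝ) y _ = eval₂Hom (RingHom.id ℝ) (h • y) p
  rw [eval₂Hom_bind₁]
  congr 2
  ext j
  simp

theorem totalDegree_bind₁_le_of_isHomogeneous {τ R : Type*} [CommRing R]
    {g : σ → MvPolynomial τ R} (hg : ∀ i, (g i).IsHomogeneous 1) (p : MvPolynomial σ R) :
    (bind₁ g p).totalDegree ≤ p.totalDegree := by
  conv_lhs => rw [← sum_homogeneousComponent p]
  rw [map_sum]
  refine totalDegree_finsetSum_le fun n hn => ?_
  have hdeg := ((homogeneousComponent_isHomogeneous n p).aeval g hg).totalDegree_le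
  simp only [one_mul, Finset.mem_range] at hdeg hn
  exact hdeg.trans (Nat.lt_succ_iff.1 hn)

theorem continuous_eval_linearMap {ι : Type*} [Fintype ι] (L : (ι → ℝ) →ₗ[ℝ] MvPolynomial σ ℝ) :
    Continuous fun z : (ι → ℝ) × (σ → ℝ) => eval z.2 (L z.1) := by
  classical
  have hL : ∀ z : (ι → ℝ) × (σ → ℝ),
      eval z.2 (L z.1) = ∑ j, z.1 j * eval z.2 (L fun i => if j = i then 1 else 0) := by
    intro z
    rw [L.pi_apply_eq_sum_univ z.1, map_sum]
    simp only [smul_eval]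
  simp only [hL]
  exact continuous_finsetSum _ fun j _ =>
    ((continuous_apply j).comp continuous_fst).mul ((continuous_eval _).comp continuous_snd)

theorem eq_zero_of_isOpen_of_eval_eq_zero [Fintype σ] {U : Set (σ → ℝ)} (hU : IsOpen U)
    {x₀ : σ → ℝ} (hx₀ : x₀ ∈ U) {q : MvPolynomial σ ℝ} (hq : ∀ x ∈ U, eval x q = 0) : q = 0 := by
  have hzero := (AnalyticOnNhd.eval_mvPolynomial q).eqOn_zero_of_preconnected_of_eventuallyEq_zero
    isPreconnected_univ (Set.mem_univ x₀) (Filter.eventually_of_mem (hU.mem_nhds hx₀) hq)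
  exact MvPolynomial.funext fun x => by simpa using hzero (Set.mem_univ x)

end MvPolynomial

theorem exists_le_mul_of_homogeneous {E : Type*} [NormedAddCommGroup E] [NormedSpace ℝ E]
    [ProperSpace E] {F G : E → ℝ} (hF : Continuous F) (hG : Continuous G)
    (hF_smul : ∀ (t : ℝ) x, F (t • x) = t ^ 2 * F x)
    (hG_smul : ∀ (t : ℝ) x, G (t • x) = t ^ 2 * G x)
    (hG_pos : ∀ x, x ≠ 0 → 0 < G x) : ∃ C, 0 < C ∧ ∀ x, F x ≤ C * G x := by
  have hF0 : F 0 = 0 := by simpa using hF_smul 0 0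
  have hG0 : G 0 = 0 := by simpa using hG_smul 0 0
  rcases subsingleton_or_nontrivial E with hE | hE
  · exact ⟨1, one_pos, fun x => by simp [Subsingleton.elim x 0, hF0, hG0]⟩
  have hS : (Metric.sphere (0 : E) 1).Nonempty := NormedSpace.sphere_nonempty.2 zero_le_one
  obtain ⟨u₁, -, hu₁⟩ := (isCompact_sphere (0 : E) 1).exists_isMaxOn hS hF.continuousOn
  obtain ⟨u₀, hu₀, hu₀_min⟩ := (isCompact_sphere (0 : E) 1).exists_isMinOn hS hG.continuousOn
  have hm : 0 < G u₀ := hG_pos u₀ (ne_zero_of_mem_unit_sphere ⟨u₀, hu₀⟩)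
  refine ⟨(|F u₁| + 1) / G u₀, by positivity, fun x => ?_⟩
  rcases eq_or_ne x 0 with rfl | hx
  · simp [hF0, hG0]
  set u := ‖x‖⁻¹ • x
  have hu : u ∈ Metric.sphere (0 : E) 1 := by
    simp [u, norm_smul, inv_mul_cancel₀ (norm_ne_zero_iff.2 hx)]
  have hxu : x = ‖x‖ • u := by simp [u, smul_inv_smul₀ (norm_ne_zero_iff.2 hx)]
  have hFu : F u ≤ (|F u₁| + 1) / G u₀ * G u := calc
    F u ≤ |F u₁| := (hu₁ hu).trans (le_abs_self _)
    _ ≤ (|F u₁| + 1) / G u₀ * G u₀ := by rw [div_mul_cancel₀ _ hm.ne']; linarith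
    _ ≤ (|F u₁| + 1) / G u₀ * G u := by gcongr; exact hu₀_min hu
  rw [hxu, hF_smul, hG_smul, mul_left_comm]
  gcongr

def unitCube (σ : Type*) : Set (σ → ℝ) := Set.univ.pi fun _ => Set.Ioo 0 1

section UnitCube

variable {σ : Type*} [Fintype σ]

theorem isOpen_unitCube : IsOpen (unitCube σ) :=
  isOpen_set_pi Set.finite_univ fun _ _ => isOpen_Ioo

theorem integrableOn_unitCube {f : (σ → ℝ) → ℝ} (hf : Continuous f) :
    IntegrableOn f (unitCube σ) :=
  (hf.continuousOn.integrableOn_compact (isCompact_univ_pi fun _ => isCompact_Icc)).mono_set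
    (Set.pi_mono fun _ _ => Set.Ioo_subset_Icc_self)

theorem continuous_integral_unitCube {E : Type*} [TopologicalSpace E] [FirstCountableTopology E]
    [LocallyCompactSpace E] {f : E → (σ → ℝ) → ℝ} (hf : Continuous f.uncurry) :
    Continuous fun c => ∫ x in unitCube σ, f c x := by
  have hIcc : ∀ c, ∫ x in unitCube σ, f c x = ∫ x in Set.Icc 0 1, f c x := fun c =>
    setIntegral_congr_set Measure.univ_pi_Ioo_ae_eq_Icc
  simp only [hIcc]
  exact continuous_parametric_integral_of_continuous hf isCompact_Icc

theorem integral_unitCube_sq_eval_pos {q : MvPolynomial σ ℝ} (hq : q ≠ 0) :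
    0 < ∫ x in unitCube σ, (MvPolynomial.eval x q) ^ 2 := by
  have hcont : Continuous fun x => (MvPolynomial.eval x q) ^ 2 :=
    (MvPolynomial.continuous_eval q).pow 2
  rw [setIntegral_pos_iff_support_of_nonneg_ae (Filter.Eventually.of_forall fun x => sq_nonneg _)
    (integrableOn_unitCube hcont)]
  refine (hcont.isOpen_support.inter isOpen_unitCube).measure_pos _ ?_
  by_contra hempty
  refine hq (MvPolynomial.eq_zero_of_isOpen_of_eval_eq_zero isOpen_unitCube
    (x₀ := fun _ => 1 / 2) (by norm_num [unitCube]) fun x hx => ?_)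
  by_contra hx'
  exact hempty ⟨x, by simpa using hx', hx⟩

theorem integral_cube_eq_pow_mul_integral_unitCube {h : ℝ} (hh : 0 < h) (f : (σ → ℝ) → ℝ) :
    ∫ x in Set.univ.pi (fun _ : σ => Set.Ioo 0 h), f x
      = h ^ Fintype.card σ * ∫ x in unitCube σ, f (h • x) := by
  have hcube : h • unitCube σ = Set.univ.pi fun _ : σ => Set.Ioo 0 h := by
    rw [unitCube, smul_pi₀ _ _ hh.ne']
    congr 1
    ext1 i
    simp [LinearOrderedField.smul_Ioo hh]
  rw [Measure.setIntegral_comp_smul_of_pos (μ := volume) _ _ hh, hcube,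
    Module.finrank_fintype_fun_eq_card, smul_eq_mul, ← mul_assoc,
    mul_inv_cancel₀ (by positivity), one_mul]

end UnitCube

open MvPolynomial

noncomputable def bubble (σ : Type*) [Fintype σ] : MvPolynomial σ ℝ := ∏ j, 4 * X j * (1 - X j)

theorem exists_integral_unitCube_pderiv_bubble_mul_le (σ : Type*) [Fintype σ] (k : ℕ) :
    ∃ K, 0 < K ∧ ∀ q : MvPolynomial σ ℝ, q.totalDegree ≤ k →
      ∫ x in unitCube σ, ∑ i, (eval x (pderiv i (bubble σ * q))) ^ 2
        ≤ K * ∫ x in unitCube σ, (eval x q) ^ 2 := by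
  let V := restrictTotalDegree σ ℝ k
  let b := Module.finBasis ℝ V
  let P : (Fin (Module.finrank ℝ V) → ℝ) →ₗ[ℝ] MvPolynomial σ ℝ :=
    V.subtype ∘ₗ b.equivFun.symm.toLinearMap
  let D : σ → (Fin (Module.finrank ℝ V) → ℝ) →ₗ[ℝ] MvPolynomial σ ℝ := fun i =>
    (pderiv i).toLinearMap ∘ₗ LinearMap.mulLeft ℝ (bubble σ) ∘ₗ P
  have hP : Function.Injective P := V.injective_subtype.comp b.equivFun.symm.injective
  have eval_smul : ∀ (L : (Fin (Module.finrank ℝ V) → ℝ) →ₗ[ℝ] MvPolynomial σ ℝ) t c x,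
      eval x (L (t • c)) = t * eval x (L c) := fun L t c x => by rw [map_smul, smul_eval]
  obtain ⟨K, hK, hle⟩ := exists_le_mul_of_homogeneous
    (F := fun c => ∫ x in unitCube σ, ∑ i, (eval x (D i c)) ^ 2)
    (G := fun c => ∫ x in unitCube σ, (eval x (P c)) ^ 2)
    (continuous_integral_unitCube
      (continuous_finsetSum _ fun i _ => (continuous_eval_linearMap (D i)).pow 2))
    (continuous_integral_unitCube (by exact (continuous_eval_linearMap P).pow 2))
    (fun t c => by simp only [eval_smul, mul_pow, ← Finset.mul_sum, integral_const_mul])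
    (fun t c => by simp only [eval_smul, mul_pow, integral_const_mul])
    (fun c hc => integral_unitCube_sq_eval_pos <| by simpa using hP.ne hc)
  refine ⟨K, hK, fun q hq => ?_⟩
  simpa [P, D] using hle (b.equivFun ⟨q, (mem_restrictTotalDegree σ k q).2 hq⟩)

theorem stmt_11_general (d k : ℕ) :
    ∃ γ₂ : ℝ, 0 < γ₂ ∧
      ∀ h : ℝ, 0 < h →
        ∀ q : MvPolynomial (Fin d) ℝ, q.totalDegree ≤ k →
          Real.sqrt (∫ x in Set.univ.pi (fun _ : Fin d => Set.Ioo (0:ℝ) h),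
              ∑ i : Fin d,
                (fderiv ℝ
                    (fun y : Fin d → ℝ =>
                      (∏ j : Fin d, 4 * (y j / h) * (1 - y j / h)) *
                        MvPolynomial.eval y q)
                    x (Pi.single i 1)) ^ 2) ≤
            γ₂ * h⁻¹ *
              Real.sqrt (∫ x in Set.univ.pi (fun _ : Fin d => Set.Ioo (0:ℝ) h),
                (MvPolynomial.eval x q) ^ 2) := by
  obtain ⟨K, hK, hbound⟩ := exists_integral_unitCube_pderiv_bubble_mul_le (Fin d) k
  refine ⟨Real.sqrt K, Real.sqrt_pos.2 hK, fun h hh q hq => ?_⟩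
  set r := bind₁ (fun j => C h * X j) q
  have hr : r.totalDegree ≤ k :=
    (totalDegree_bind₁_le_of_isHomogeneous (isHomogeneous_C_mul_X h) q).trans hq
  have hfun : (fun y : Fin d → ℝ => (∏ j, 4 * (y j / h) * (1 - y j / h)) * eval y q)
      = fun y => eval (h⁻¹ • y) (bubble (Fin d) * r) := by
    funext y
    simp [bubble, r, eval_bind₁_C_mul_X, smul_smul, hh.ne', div_eq_inv_mul]
  simp only [hfun, fderiv_eval_smul_single]
  rw [integral_cube_eq_pow_mul_integral_unitCube hh, integral_cube_eq_pow_mul_integral_unitCube hh]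
  simp only [smul_smul, inv_mul_cancel₀ hh.ne', one_smul, mul_pow, ← Finset.mul_sum,
    integral_const_mul, ← eval_bind₁_C_mul_X]
  rw [← Real.sqrt_sq (by positivity : 0 ≤ √K * h⁻¹), ← Real.sqrt_mul (sq_nonneg _)]
  refine Real.sqrt_le_sqrt ?_
  calc _ ≤ h ^ d * (h⁻¹ ^ 2 * (K * ∫ x in unitCube (Fin d), (eval x r) ^ 2)) := by
        rw [Fintype.card_fin]; gcongr; exact hbound r hr
    _ = _ := by rw [mul_pow, Real.sq_sqrt hK.le, Fintype.card_fin]; ring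

/-- Element bubble inverse estimate: there is `γ₂ > 0` depending only on `d`
and `k` such that for all `h > 0` and all polynomials `q` of total degree at
most `k`, `‖∇(ψ_h q)‖_{L²((0,h)^d)} ≤ γ₂ h⁻¹ ‖q‖_{L²((0,h)^d)}`, where the
squared Euclidean norm of the gradient is the sum of the squared partial
derivatives. -/
theorem stmt_11 (d k : ℕ) (hd : 1 ≤ d) :
    ∃ γ₂ : ℝ, 0 < γ₂ ∧
      ∀ h : ℝ, 0 < h →
        ∀ q : MvPolynomial (Fin d) ℝ, q.totalDegree ≤ k →
          Real.sqrt (∫ x in Set.univ.pi (fun _ : Fin d => Set.Ioo (0:ℝ) h),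
              ∑ i : Fin d,
                (fderiv ℝ
                    (fun y : Fin d → ℝ =>
                      (∏ j : Fin d, 4 * (y j / h) * (1 - y j / h)) *
                        MvPolynomial.eval y q)
                    x (Pi.single i 1)) ^ 2) ≤
            γ₂ * h⁻¹ *
              Real.sqrt (∫ x in Set.univ.pi (fun _ : Fin d => Set.Ioo (0:ℝ) h),
                (MvPolynomial.eval x q) ^ 2) :=
  stmt_11_general d k
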